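/- (Acyclicity of the Fedosov differential in positive degrees.) Let D = ∇ − δ + A· be a nilpotent Fedosov derivation (D² = 0, with A of y-degree ≥ 2 and δ^{-1}A = 0). If q ≥ 1 and a ∈ Ω^q satisfies Da = 0, then there exists b ∈ Ω^{q−1} with Db = a; moreover b can be taken to be the solution of the recursion b = −δ^{-1}a + δ^{-1}(∇b + A·b), which satisfies δ^{-1}b = 0 and σ(b) = 0. -/

import Mathlib

/-!
Coordinate model of the Fedosov resolution on `M = ℝ^d`, following Dolgushev,
"Covariant and equivariant formality theorems".

An element `a : Omega d` represents the exterior form with values in the formally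
completed symmetric algebra of the cotangent bundle,
`a = ∑ a_{m,S}(x) y^m dx^S`, where `m` is the multi-index of exponents of the
commuting formal fibre variables `y^1, …, y^d` and `S` is the (increasingly
ordered) set of indices of the anticommuting `dx`'s; `a m S : (Fin d → ℝ) → ℝ`
is the corresponding (smooth) coefficient.
-/

noncomputable section
open scoped BigOperators

namespace FedosovModel

/-- Multi-indices: exponents of the formal fibre variables `y`. -/
abbrev Mi (d : ℕ) := Fin d →₀ ℕ

/-- The coordinate model of `Ω(ℝ^d, 𝒮M)`: `a m S x` is the coefficient of the
monomial `y^m dx^S` (with the `dx`'s in increasing order) at the point `x`. -/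
abbrev Omega (d : ℕ) := Mi d → Finset (Fin d) → (Fin d → ℝ) → ℝ

variable (d : ℕ)

/-- total `y`-degree of a multi-index -/
def ydeg (m : Mi d) : ℕ := ∑ i, m i

/-- all coefficients are smooth functions on `ℝ^d` -/
def Smooth (a : Omega d) : Prop := ∀ m S, ContDiff ℝ (⊤ : ℕ∞) (a m S)

/-- `a` is homogeneous of exterior degree `q`, i.e. `a ∈ Ω^q` -/
def ExtDeg (q : ℕ) (a : Omega d) : Prop := ∀ m S, S.card ≠ q → a m S = 0

/-- the sign defined by `dx^i ∧ dx^S = sgn i S • dx^{S ∪ {i}}` for `i ∉ S` -/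
def sgn (i : Fin d) (S : Finset (Fin d)) : ℝ :=
  (-1 : ℝ) ^ (S.filter (fun j => j < i)).card

/-- the projection `σ(a) = a|_{y = dx = 0}` -/
def sigmaOm (a : Omega d) : (Fin d → ℝ) → ℝ := a 0 ∅

/-- a function on `ℝ^d` viewed as an element of `Ω` with no `y`- and `dx`-dependence -/
def ofFun (f : (Fin d → ℝ) → ℝ) : Omega d :=
  fun m S => if m = 0 ∧ S = ∅ then f else 0

/-- the differential `δ = dx^i ∂/∂y^i` -/
def deltaOp (a : Omega d) : Omega d := fun m S x =>
  ∑ i ∈ S, sgn d i (S.erase i) * ((m i : ℝ) + 1) *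
    a (m + Finsupp.single i 1) (S.erase i) x

/-- the homotopy operator `δ⁻¹`, acting on a component of `y`-degree `p` and
exterior degree `q` with `p + q > 0` as `(p+q)⁻¹ y^k ι(∂/∂x^k)`, and as `0`
on the component `p = q = 0`. -/
def deltaInv (a : Omega d) : Omega d := fun m S x =>
  (((ydeg d m + S.card : ℕ) : ℝ))⁻¹ *
    ∑ k : Fin d,
      if k ∉ S ∧ 1 ≤ m k then sgn d k S * a (m - Finsupp.single k 1) (insert k S) x
      else 0

/-- partial derivative `∂f/∂x^i` -/
def pd (i : Fin d) (f : (Fin d → ℝ) → ℝ) : (Fin d → ℝ) → ℝ :=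
  fun x => fderiv ℝ f x (Pi.single i 1)

/-- Christoffel symbols: `Γ k i j = Γ^k_{ij}` -/
abbrev Christoffel (d : ℕ) := Fin d → Fin d → Fin d → (Fin d → ℝ) → ℝ

def SmoothGamma (Γ : Christoffel d) : Prop := ∀ k i j, ContDiff ℝ (⊤ : ℕ∞) (Γ k i j)

def TorsionFree (Γ : Christoffel d) : Prop := ∀ k i j, Γ k i j = Γ k j i

/-- the covariant derivative `∇a = dx^i ∂a/∂x^i − dx^i Γ^k_{ij}(x) y^j ∂a/∂y^k` -/
def nablaOp (Γ : Christoffel d) (a : Omega d) : Omega d := fun m S x =>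
  ∑ i ∈ S, sgn d i (S.erase i) *
    (pd d i (a m (S.erase i)) x -
      ∑ j : Fin d, ∑ k : Fin d,
        if 1 ≤ m j then
          let m' : Mi d := m + Finsupp.single k 1 - Finsupp.single j 1
          Γ k i j x * ((m' k : ℕ) : ℝ) * a m' (S.erase i) x
        else 0)

/-- the Riemann curvature tensor
`(R_{ij})^k_l = ∂_i Γ^k_{jl} − ∂_j Γ^k_{il} + Γ^k_{im} Γ^m_{jl} − Γ^k_{jm} Γ^m_{il}` -/
def Riem (Γ : Christoffel d) (i j k l : Fin d) : (Fin d → ℝ) → ℝ := fun x =>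
  pd d i (Γ k j l) x - pd d j (Γ k i l) x +
    ∑ mm : Fin d, (Γ k i mm x * Γ mm j l x - Γ k j mm x * Γ mm i l x)

/-- the curvature operator `R·a = −(1/2) dx^i dx^j (R_{ij})^k_l y^l ∂a/∂y^k` -/
def curvAct (Γ : Christoffel d) (a : Omega d) : Omega d := fun m S x =>
  -(1/2 : ℝ) * ∑ i ∈ S, ∑ j ∈ S.erase i,
    sgn d i (S.erase i) * sgn d j ((S.erase i).erase j) *
      ∑ k : Fin d, ∑ l : Fin d,
        if 1 ≤ m l then
          let m' : Mi d := m + Finsupp.single k 1 - Finsupp.single l 1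
          Riem d Γ i j k l x * ((m' k : ℕ) : ℝ) * a m' ((S.erase i).erase j) x
        else 0

/-! ### Fiberwise-vector-field-valued one-forms and the Fedosov differential -/

/-- a fiberwise-vector-field-valued one-form `B = dx^k B^j_k(x,y) ∂/∂y^j`:
`B j k m x` is the coefficient of `dx^k y^m ∂/∂y^j` -/
abbrev VF1 (d : ℕ) := Fin d → Fin d → Mi d → (Fin d → ℝ) → ℝ

def SmoothVF1 (A : VF1 d) : Prop := ∀ j k m, ContDiff ℝ (⊤ : ℕ∞) (A j k m)

/-- all terms of `A` have `y`-degree at least 2 -/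
def LowDegVanish (A : VF1 d) : Prop := ∀ j k m, ydeg d m < 2 → A j k m = 0

/-- the action of a fiberwise-vector-field-valued one-form on `Ω` as an odd
derivation: `A·a = dx^k A^j_k(x,y) ∂a/∂y^j` -/
def vact (A : VF1 d) (a : Omega d) : Omega d := fun m S x =>
  ∑ k ∈ S, sgn d k (S.erase k) *
    ∑ j : Fin d, ∑ p ∈ Finset.HasAntidiagonal.antidiagonal m,
      A j k p.1 x * ((p.2 j : ℝ) + 1) * a (p.2 + Finsupp.single j 1) (S.erase k) x

/-- the `∂/∂y^j`-component of a fiberwise-vector-field-valued one-form,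
as an element of `Ω` -/
def vf1ToOmega (A : VF1 d) (j : Fin d) : Omega d :=
  fun m S x => ∑ k : Fin d, if S = {k} then A j k m x else 0

/-- the connection one-form `Γ = −dx^i Γ^k_{ij}(x) y^j ∂/∂y^k` as a
fiberwise-vector-field-valued one-form -/
def GammaVF (Γ : Christoffel d) : VF1 d := fun jf kx m x =>
  -∑ l : Fin d, if m = Finsupp.single l 1 then Γ jf kx l x else 0

/-- the `∂/∂y^k`-component of the curvature
`R = −(1/2) dx^i dx^j (R_{ij})^k_l y^l ∂/∂y^k`, as an element of `Ω` -/
def RVForm (Γ : Christoffel d) (kf : Fin d) : Omega d := fun m S x =>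
  -(1/2 : ℝ) * ∑ i : Fin d, ∑ j : Fin d,
    (if S = {i, j} ∧ i < j then (1 : ℝ) else if S = {i, j} ∧ j < i then -1 else 0) *
      ∑ l : Fin d, if m = Finsupp.single l 1 then Riem d Γ i j kf l x else 0

/-- the normalization `δ⁻¹ A = 0` (componentwise in the fibre index) -/
def DeltaInvVanish (A : VF1 d) : Prop := ∀ j, deltaInv d (vf1ToOmega d A j) = 0

/-- the Fedosov derivation `D = ∇ − δ + A·` -/
def Dfed (Γ : Christoffel d) (A : VF1 d) (a : Omega d) : Omega d :=
  nablaOp d Γ a - deltaOp d a + vact d A a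

/-- nilpotency of the Fedosov derivation: `D ∘ D = 0` on `Ω` -/
def Nilpotent (Γ : Christoffel d) (A : VF1 d) : Prop :=
  ∀ a : Omega d, Smooth d a → Dfed d Γ A (Dfed d Γ A a) = 0

/-- the fixed-point equation `A = δ⁻¹R + δ⁻¹(∇A + (1/2)[A,A])`, componentwise in
the fibre index `j`; here `(∇A)^j = dx^i ∂_{x^i}(A^j) + Γ·(A^j) + A·(Γ^j)` and
`((1/2)[A,A])^j = A·(A^j) = dx^k dx^l A^m_k ∂A^j_l/∂y^m`. -/
def FedosovFixedPoint (Γ : Christoffel d) (A : VF1 d) : Prop :=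
  ∀ j, vf1ToOmega d A j =
    deltaInv d (RVForm d Γ j) +
      deltaInv d (nablaOp d Γ (vf1ToOmega d A j) +
        vact d A (vf1ToOmega d (GammaVF d Γ) j) +
        vact d A (vf1ToOmega d A j))

/-! ### The supercommutative product on `Ω` -/

/-- sign of `dx^S ∧ dx^T = shuffleSgn S T • dx^{S ∪ T}` for disjoint `S`, `T` -/
def shuffleSgn (S T : Finset (Fin d)) : ℝ :=
  (-1 : ℝ) ^ ∑ i ∈ S, (T.filter (fun j => j < i)).card

/-- the supercommutative product of `Ω` -/
def mulOm (a b : Omega d) : Omega d := fun m S x =>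
  ∑ T ∈ S.powerset, shuffleSgn d T (S \ T) *
    ∑ p ∈ Finset.HasAntidiagonal.antidiagonal m, a p.1 T x * b p.2 (S \ T) x

/-- `a` is the flat section of the Fedosov differential extending `a₀`:
`a ∈ Ω⁰`, `Da = 0`, `σ(a) = a₀`. -/
def IsFlatSection (Γ : Christoffel d) (A : VF1 d) (a₀ : (Fin d → ℝ) → ℝ)
    (a : Omega d) : Prop :=
  ExtDeg d 0 a ∧ Smooth d a ∧ Dfed d Γ A a = 0 ∧ sigmaOm d a = a₀

/-!
`δ⁻¹` is `(p + q)⁻¹ κ` with `κ = y^k ι(∂/∂x^k)`. Writing `δ = dx^i ∂/∂y^i` and `κ` in terms of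
the elementary operators `y^k`, `∂/∂y^i`, `dx^i`, `ι(∂/∂x^k)`, their canonical (anti)commutation
relations give `δκ + κδ = p + q` and `κ² = 0`; since `δ`, `κ` preserve `p + q`, this is the Hodge
decomposition `u = σ(u) + δδ⁻¹u + δ⁻¹δu` together with `(δ⁻¹)² = 0`.

`δ⁻¹` raises the `y`-degree while `∇` and `A·` (as `A` has `y`-degree `≥ 2`) do not lower it, so
`w ↦ f + δ⁻¹(∇w + A·w)` has exactly one fixed point, built degree by degree. For `f = -δ⁻¹a` this is
`b`, and `δ⁻¹b = 0`, `σ(b) = 0`. By the Hodge decomposition a `D`-closed `u` is the fixed point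
for `f = σ(u) + δδ⁻¹u`, hence is determined by `δ⁻¹u` and `σ(u)`. Now `Db` is closed as `D² = 0`,
the recursion gives `δ⁻¹Db = δ⁻¹a`, and `σ(Db) = 0 = σ(a)`; so `Db = a`.
-/

variable {d}

/-! ### `y`-degree and fixed points of strictly causal operators -/

lemma ydeg_eq_degree (m : Mi d) : ydeg d m = m.degree := (Finsupp.degree_eq_sum m).symm

lemma ydeg_add (m n : Mi d) : ydeg d (m + n) = ydeg d m + ydeg d n := by
  simp only [ydeg_eq_degree, map_add]

lemma ydeg_single (k : Fin d) : ydeg d (Finsupp.single k 1) = 1 := by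
  rw [ydeg_eq_degree, Finsupp.degree_single]

lemma ydeg_eq_zero_iff {m : Mi d} : ydeg d m = 0 ↔ m = 0 := by
  rw [ydeg_eq_degree, Finsupp.degree_eq_zero_iff]

lemma sub_single_add_single {m : Mi d} {k : Fin d} (h : 1 ≤ m k) :
    m - Finsupp.single k 1 + Finsupp.single k 1 = m :=
  tsub_add_cancel_of_le (Finsupp.single_le_iff.2 h)

lemma ydeg_sub_single_add_one {m : Mi d} {k : Fin d} (h : 1 ≤ m k) :
    ydeg d (m - Finsupp.single k 1) + 1 = ydeg d m := by
  conv_rhs => rw [← sub_single_add_single h]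
  rw [ydeg_add, ydeg_single]

def YCausal (T : Omega d → Omega d) : Prop :=
  ∀ u v m, (∀ m', ydeg d m' ≤ ydeg d m → u m' = v m') → T u m = T v m

def StrictlyYCausal (T : Omega d → Omega d) : Prop :=
  ∀ u v m, (∀ m', ydeg d m' < ydeg d m → u m' = v m') → T u m = T v m

lemma YCausal.add {T U : Omega d → Omega d} (hT : YCausal T) (hU : YCausal U) :
    YCausal (fun u => T u + U u) := fun u v m h => by
  simp only [Pi.add_apply, hT u v m h, hU u v m h]

lemma StrictlyYCausal.comp {T U : Omega d → Omega d} (hT : StrictlyYCausal T)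
    (hU : YCausal U) : StrictlyYCausal (T ∘ U) := fun u v m h =>
  hT _ _ m fun m' hm' => hU u v m' fun m'' hm'' => h m'' (hm''.trans_lt hm')

lemma StrictlyYCausal.const_add {T : Omega d → Omega d} (hT : StrictlyYCausal T)
    (f : Omega d) : StrictlyYCausal (fun u => f + T u) := fun u v m h => by
  simp only [Pi.add_apply, hT u v m h]

lemma StrictlyYCausal.eq_of_isFixedPt {T : Omega d → Omega d} (hT : StrictlyYCausal T)
    {u v : Omega d} (hu : Function.IsFixedPt T u) (hv : Function.IsFixedPt T v) : u = v := by
  suffices h : ∀ n m, ydeg d m = n → u m = v m from funext fun m => h _ m rfl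
  intro n
  induction n using Nat.strong_induction_on with
  | _ n ih =>
    intro m hm
    rw [← hu, ← hv]
    exact hT u v m fun m' hm' => ih _ (hm ▸ hm') m' rfl

def yFixedPoint (T : Omega d → Omega d) : Omega d := fun m => T^[ydeg d m + 1] 0 m

lemma StrictlyYCausal.iterate_succ_apply {T : Omega d → Omega d} (hT : StrictlyYCausal T)
    {n : ℕ} {m : Mi d} (hm : ydeg d m < n) : T^[n + 1] 0 m = T^[n] 0 m := by
  induction n generalizing m with
  | zero => exact absurd hm (Nat.not_lt_zero _)
  | succ n ih =>
    rw [Function.iterate_succ_apply' T (n + 1)]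
    conv_rhs => rw [Function.iterate_succ_apply']
    exact hT _ _ m fun m' hm' => ih (by omega)

lemma StrictlyYCausal.iterate_apply {T : Omega d → Omega d} (hT : StrictlyYCausal T)
    {n : ℕ} {m : Mi d} (hm : ydeg d m < n) : T^[n] 0 m = yFixedPoint T m := by
  induction n, Nat.succ_le_of_lt hm using Nat.le_induction with
  | base => rfl
  | succ n hn ih => rw [hT.iterate_succ_apply (by omega), ih (by omega)]

lemma StrictlyYCausal.isFixedPt_yFixedPoint {T : Omega d → Omega d}
    (hT : StrictlyYCausal T) : Function.IsFixedPt T (yFixedPoint T) := by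
  funext m
  change T (yFixedPoint T) m = T^[ydeg d m + 1] 0 m
  rw [Function.iterate_succ_apply']
  exact hT _ _ m fun m' hm' => (hT.iterate_apply hm').symm

lemma yFixedPoint_induction {T : Omega d → Omega d} (P : Mi d → Finset (Fin d) →
    ((Fin d → ℝ) → ℝ) → Prop) (h0 : ∀ m S, P m S 0)
    (hT : ∀ u, (∀ m S, P m S (u m S)) → ∀ m S, P m S (T u m S)) :
    ∀ m S, P m S (yFixedPoint T m S) := fun m =>
  Function.Iterate.rec (fun u : Omega d => ∀ m S, P m S (u m S)) h0 hT (ydeg d m + 1) m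

/-! ### The Koszul calculus of `δ` and `δ⁻¹` -/

section Koszul

open Finsupp (single)

/-- Multiplication by `y^k`; below, `yDeriv i`, `dxMul i` and `dxContr k` are `∂/∂y^i`, `dx^i ∧`
and `ι(∂/∂x^k)`. -/
def yMul (k : Fin d) : Module.End ℝ (Omega d) where
  toFun u m := if 1 ≤ m k then u (m - single k 1) else 0
  map_add' u v := by funext m; dsimp only [Pi.add_apply]; split_ifs <;> simp
  map_smul' c u := by funext m; dsimp only [Pi.smul_apply]; split_ifs <;> simp

def yDeriv (i : Fin d) : Module.End ℝ (Omega d) where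
  toFun u m := ((m i : ℝ) + 1) • u (m + single i 1)
  map_add' u v := by funext m; simp
  map_smul' c u := by funext m; simp [smul_comm c]

def dxMul (i : Fin d) : Module.End ℝ (Omega d) where
  toFun u m S := if i ∈ S then sgn d i (S.erase i) • u m (S.erase i) else 0
  map_add' u v := by funext m S; dsimp only [Pi.add_apply]; split_ifs <;> simp
  map_smul' c u := by
    funext m S; dsimp only [Pi.smul_apply]; split_ifs <;> simp [smul_comm c]

def dxContr (k : Fin d) : Module.End ℝ (Omega d) where
  toFun u m S := if k ∉ S then sgn d k S • u m (insert k S) else 0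
  map_add' u v := by funext m S; dsimp only [Pi.add_apply]; split_ifs <;> simp
  map_smul' c u := by
    funext m S; dsimp only [Pi.smul_apply]; split_ifs <;> simp [smul_comm c]

def yDegOp : Module.End ℝ (Omega d) where
  toFun u m := (ydeg d m : ℝ) • u m
  map_add' u v := by funext m; simp
  map_smul' c u := by funext m; simp [smul_comm c]

def dxDegOp : Module.End ℝ (Omega d) where
  toFun u m S := (S.card : ℝ) • u m S
  map_add' u v := by funext m S; simp
  map_smul' c u := by funext m S; simp [smul_comm c]

/-- Multiplication by `(p + q)⁻¹`, which is `0⁻¹ = 0` on the component `p = q = 0`. -/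
def degInv : Module.End ℝ (Omega d) where
  toFun u m S := (((ydeg d m + S.card : ℕ) : ℝ))⁻¹ • u m S
  map_add' u v := by funext m S; simp
  map_smul' c u := by funext m S; simp [smul_comm c]

def sigmaProj : Module.End ℝ (Omega d) where
  toFun u := ofFun d (sigmaOm d u)
  map_add' u v := by funext m S; simp only [ofFun, sigmaOm, Pi.add_apply]; split_ifs <;> simp
  map_smul' c u := by funext m S; simp only [ofFun, sigmaOm, Pi.smul_apply]; split_ifs <;> simp

lemma yMul_apply (k : Fin d) (u : Omega d) (m : Mi d) (S : Finset (Fin d)) :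
    yMul k u m S = if 1 ≤ m k then u (m - single k 1) S else 0 := by
  simp only [yMul, LinearMap.coe_mk, AddHom.coe_mk]
  split_ifs <;> rfl

lemma yDeriv_apply (i : Fin d) (u : Omega d) (m : Mi d) (S : Finset (Fin d)) :
    yDeriv i u m S = ((m i : ℝ) + 1) • u (m + single i 1) S := rfl

lemma dxMul_apply (i : Fin d) (u : Omega d) (m : Mi d) (S : Finset (Fin d)) :
    dxMul i u m S = if i ∈ S then sgn d i (S.erase i) • u m (S.erase i) else 0 := rfl

lemma dxContr_apply (k : Fin d) (u : Omega d) (m : Mi d) (S : Finset (Fin d)) :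
    dxContr k u m S = if k ∉ S then sgn d k S • u m (insert k S) else 0 := rfl

lemma yDegOp_apply (u : Omega d) (m : Mi d) (S : Finset (Fin d)) :
    yDegOp u m S = (ydeg d m : ℝ) • u m S := rfl

lemma dxDegOp_apply (u : Omega d) (m : Mi d) (S : Finset (Fin d)) :
    dxDegOp u m S = (S.card : ℝ) • u m S := rfl

lemma degInv_apply (u : Omega d) (m : Mi d) (S : Finset (Fin d)) :
    degInv u m S = (((ydeg d m + S.card : ℕ) : ℝ))⁻¹ • u m S := rfl

lemma sigmaProj_apply (u : Omega d) : sigmaProj u = ofFun d (sigmaOm d u) := rfl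

lemma sgn_mul_self (i : Fin d) (T : Finset (Fin d)) : sgn d i T * sgn d i T = 1 := by
  rw [sgn, ← pow_add]
  exact Even.neg_one_pow ⟨_, rfl⟩

lemma sgn_insert {i : Fin d} {T : Finset (Fin d)} (h : i ∉ T) (k : Fin d) :
    sgn d k (insert i T) = (if i < k then -1 else 1) * sgn d k T := by
  rw [sgn, sgn, Finset.filter_insert]
  split
  · rw [Finset.card_insert_of_notMem (fun hmem => h (Finset.mem_filter.1 hmem).1), pow_succ]
    ring
  · rw [one_mul]

lemma ite_lt_neg_one_one {i k : Fin d} (h : i ≠ k) :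
    (if i < k then (-1 : ℝ) else 1) = -(if k < i then -1 else 1) := by
  rcases h.lt_or_gt with h | h
  · simp [h, h.not_gt]
  · simp [h, h.not_gt]

lemma sgn_insert_mul_sgn_insert {i k : Fin d} {T : Finset (Fin d)} (hi : i ∉ T) (hk : k ∉ T)
    (hik : i ≠ k) : sgn d k (insert i T) * sgn d i (insert k T) = -(sgn d k T * sgn d i T) := by
  rw [sgn_insert hi, sgn_insert hk, ite_lt_neg_one_one hik]
  have := sgn_mul_self (d := d) i T
  split_ifs <;> ring

lemma sgn_mul_sgn_insert_add {k l : Fin d} {T : Finset (Fin d)} (hk : k ∉ T) (hl : l ∉ T)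
    (hkl : k ≠ l) : sgn d k T * sgn d l (insert k T) + sgn d l T * sgn d k (insert l T) = 0 := by
  rw [sgn_insert hk, sgn_insert hl, ite_lt_neg_one_one hkl]
  ring

lemma yDeriv_mul_yMul (i k : Fin d) :
    yDeriv i * yMul k = yMul k * yDeriv i + if i = k then 1 else 0 := by
  ext u m S : 3
  simp only [LinearMap.add_apply, Module.End.mul_apply, yDeriv_apply, yMul_apply,
    Pi.add_apply, Finsupp.add_apply, Finsupp.tsub_apply, Finsupp.single_apply]
  rcases eq_or_ne i k with rfl | hik
  · by_cases h : 1 ≤ m i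
    · simp only [h, if_true, add_tsub_cancel_right, sub_single_add_single h, Module.End.one_apply,
        Nat.cast_sub h]
      simp only [show 1 ≤ m i + 1 by omega, if_true, Nat.cast_one]
      module
    · simp [show m i = 0 by omega]
  · have hki : k ≠ i := hik.symm
    simp only [hik, hki, if_false, add_zero, tsub_zero, LinearMap.zero_apply, Pi.zero_apply]
    split_ifs with h
    · rw [tsub_add_eq_add_tsub (Finsupp.single_le_iff.2 h)]
    · rw [smul_zero]

lemma dxContr_mul_dxMul_add (k i : Fin d) :
    dxContr k * dxMul i + dxMul i * dxContr k = if i = k then 1 else 0 := by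
  ext u m S : 3
  simp only [LinearMap.add_apply, Module.End.mul_apply, dxContr_apply, dxMul_apply, Pi.add_apply]
  rcases eq_or_ne i k with rfl | hik
  · by_cases hi : i ∈ S
    · simp [hi, Finset.insert_erase hi, smul_smul, sgn_mul_self]
    · simp [hi, Finset.erase_insert hi, smul_smul, sgn_mul_self]
  · simp only [hik, if_false, LinearMap.zero_apply, Pi.zero_apply, Finset.mem_insert,
      Finset.mem_erase, ne_eq, hik.symm, not_false_eq_true, true_and, false_or]
    by_cases hi : i ∈ S
    · obtain ⟨T, hiT, rfl⟩ : ∃ T, i ∉ T ∧ S = insert i T :=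
        ⟨S.erase i, Finset.notMem_erase i S, (Finset.insert_erase hi).symm⟩
      by_cases hk : k ∈ insert i T
      · simp [hk]
      · have hkT : k ∉ T := fun h => hk (Finset.mem_insert_of_mem h)
        simp only [hk, not_false_eq_true, if_true, hi, Finset.erase_insert_of_ne hik.symm,
          Finset.erase_insert hiT, smul_smul, ← add_smul, sgn_insert_mul_sgn_insert hiT hkT hik,
          mul_comm (sgn d i T), neg_add_cancel, zero_smul]
    · simp [hi]

lemma dxContr_mul_dxContr_add (k l : Fin d) :
    dxContr k * dxContr l + dxContr l * dxContr k = 0 := by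
  ext u m S : 3
  simp only [LinearMap.add_apply, Module.End.mul_apply, dxContr_apply, Pi.add_apply,
    LinearMap.zero_apply, Pi.zero_apply]
  by_cases hk : k ∈ S
  · simp [hk]
  by_cases hl : l ∈ S
  · simp [hl]
  rcases eq_or_ne k l with rfl | hkl
  · simp
  simp only [hk, hl, Finset.mem_insert, hkl, hkl.symm, or_self, not_false_eq_true, if_true,
    smul_smul, Finset.insert_comm l k S, ← add_smul, sgn_mul_sgn_insert_add hk hl hkl, zero_smul]

lemma dxMul_mul_yMul (i k : Fin d) : dxMul i * yMul k = yMul k * dxMul i := by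
  ext u m S : 3
  simp only [Module.End.mul_apply, dxMul_apply, yMul_apply]
  split_ifs <;> simp

lemma yDeriv_mul_dxContr (i k : Fin d) : yDeriv i * dxContr k = dxContr k * yDeriv i := by
  ext u m S : 3
  simp only [Module.End.mul_apply, dxContr_apply, yDeriv_apply]
  split_ifs <;> simp [smul_comm (sgn d k S)]

lemma dxContr_mul_yMul (k l : Fin d) : dxContr k * yMul l = yMul l * dxContr k := by
  ext u m S : 3
  simp only [Module.End.mul_apply, dxContr_apply, yMul_apply]
  split_ifs <;> simp

lemma yMul_mul_yMul (k l : Fin d) : yMul k * yMul l = yMul l * yMul k := by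
  ext u m S : 3
  simp only [Module.End.mul_apply, yMul_apply]
  rcases eq_or_ne k l with rfl | hkl
  · rfl
  simp only [Finsupp.tsub_apply, Finsupp.single_apply, hkl, hkl.symm, if_false, tsub_zero,
    tsub_tsub, add_comm (single k 1)]
  split_ifs <;> rfl

lemma sum_yMul_mul_yDeriv : ∑ i, yMul i * yDeriv i = (yDegOp : Module.End ℝ (Omega d)) := by
  ext u m S : 3
  have term : ∀ i, (yMul i * yDeriv i) u m S = (m i : ℝ) • u m S := fun i => by
    simp only [Module.End.mul_apply, yMul_apply, yDeriv_apply]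
    split_ifs with h
    · simp [sub_single_add_single h, Nat.cast_sub h]
    · simp [show m i = 0 by omega]
  simp only [LinearMap.sum_apply, Finset.sum_apply, term, ← Finset.sum_smul]
  simp [yDegOp_apply, ydeg]

lemma sum_dxMul_mul_dxContr :
    ∑ i, dxMul i * dxContr i = (dxDegOp : Module.End ℝ (Omega d)) := by
  ext u m S : 3
  have term : ∀ i, (dxMul i * dxContr i) u m S = if i ∈ S then u m S else 0 := fun i => by
    simp only [Module.End.mul_apply, dxMul_apply, dxContr_apply]
    by_cases h : i ∈ S
    · simp [h, Finset.insert_erase h, smul_smul, sgn_mul_self]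
    · simp [h]
  simp only [LinearMap.sum_apply, Finset.sum_apply, term, Finset.sum_ite_mem, Finset.univ_inter,
    Finset.sum_const]
  exact (Nat.cast_smul_eq_nsmul ℝ _ _).symm

lemma dxMul_mul_yDeriv_mul_degInv (i : Fin d) :
    dxMul i * yDeriv i * degInv = degInv * (dxMul i * yDeriv i) := by
  ext u m S : 3
  simp only [Module.End.mul_apply, dxMul_apply, yDeriv_apply, degInv_apply]
  split_ifs with hi
  · have hN : ydeg d (m + single i 1) + (S.erase i).card = ydeg d m + S.card := by
      rw [ydeg_add, ydeg_single, Finset.card_erase_of_mem hi]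
      have := Finset.card_pos.2 ⟨i, hi⟩
      omega
    simp only [hN, smul_smul]
    congr 1
    ring
  · simp

lemma yMul_mul_dxContr_mul_degInv (k : Fin d) :
    yMul k * dxContr k * degInv = degInv * (yMul k * dxContr k) := by
  ext u m S : 3
  simp only [Module.End.mul_apply, dxContr_apply, yMul_apply, degInv_apply]
  by_cases hm : 1 ≤ m k
  swap
  · simp [hm]
  by_cases hk : k ∈ S
  · simp [hk]
  have hN : ydeg d (m - single k 1) + (insert k S).card = ydeg d m + S.card := by
    rw [Finset.card_insert_of_notMem hk, ← ydeg_sub_single_add_one hm]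
    omega
  simp only [hm, hk, if_true, not_false_eq_true, hN, smul_comm (sgn d k S)]

lemma degInv_mul_degOp :
    degInv * (yDegOp + dxDegOp) = (1 - sigmaProj : Module.End ℝ (Omega d)) := by
  ext u m S : 3
  simp only [Module.End.mul_apply, LinearMap.add_apply, LinearMap.sub_apply, degInv_apply,
    Module.End.one_apply, Pi.add_apply, Pi.sub_apply, yDegOp_apply, dxDegOp_apply,
    sigmaProj_apply, ofFun, sigmaOm, ← add_smul]
  split_ifs with h
  · obtain ⟨rfl, rfl⟩ := h
    simp [ydeg]
  · have hN : ((ydeg d m + S.card : ℕ) : ℝ) ≠ 0 := by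
      rw [Nat.cast_ne_zero]
      intro h0
      exact h ⟨ydeg_eq_zero_iff.1 (by omega), Finset.card_eq_zero.1 (by omega)⟩
    rw [← Nat.cast_add, inv_smul_smul₀ hN, sub_zero]

def deltaL : Module.End ℝ (Omega d) := ∑ i, dxMul i * yDeriv i

/-- The unnormalized homotopy `κ = y^k ι(∂/∂x^k)`, so that `δ⁻¹ = (p + q)⁻¹ κ`. -/
def kappa : Module.End ℝ (Omega d) := ∑ k, yMul k * dxContr k

lemma deltaL_apply (u : Omega d) : deltaL u = deltaOp d u := by
  funext m S x
  simp only [deltaL, LinearMap.sum_apply, Finset.sum_apply, Module.End.mul_apply, dxMul_apply,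
    yDeriv_apply, deltaOp]
  simp only [ite_apply, Pi.zero_apply, Pi.smul_apply, smul_eq_mul, Finset.sum_ite_mem,
    Finset.univ_inter, mul_assoc]

def deltaInvL : Module.End ℝ (Omega d) := degInv * kappa

lemma deltaInvL_apply (u : Omega d) : deltaInvL u = deltaInv d u := by
  funext m S x
  simp only [deltaInvL, kappa, Module.End.mul_apply, degInv_apply, LinearMap.sum_apply,
    Finset.sum_apply, yMul_apply, dxContr_apply, deltaInv, Pi.smul_apply, smul_eq_mul]
  congr 1
  refine Finset.sum_congr rfl fun k _ => ?_
  by_cases hm : 1 ≤ m k <;> by_cases hk : k ∈ S <;> simp [hm, hk]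

lemma anticomm_dxMul_yDeriv_yMul_dxContr (i k : Fin d) :
    dxMul i * yDeriv i * (yMul k * dxContr k) + yMul k * dxContr k * (dxMul i * yDeriv i) =
      if i = k then dxMul i * dxContr i + yMul i * yDeriv i else 0 := by
  have hy := yDeriv_mul_yMul i k
  have hx := eq_sub_of_add_eq (dxContr_mul_dxMul_add k i)
  have h3 := dxMul_mul_yMul i k
  have h4 := yDeriv_mul_dxContr i k
  calc _ = dxMul i * (yDeriv i * yMul k) * dxContr k
        + yMul k * (dxContr k * dxMul i) * yDeriv i := by simp only [mul_assoc]
    _ = dxMul i * yMul k * (yDeriv i * dxContr k) - yMul k * dxMul i * (dxContr k * yDeriv i)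
        + (dxMul i * (if i = k then 1 else 0) * dxContr k
          + yMul k * (if i = k then 1 else 0) * yDeriv i) := by
          rw [hy, hx]
          simp only [mul_add, add_mul, mul_sub, sub_mul, mul_assoc]
          abel
    _ = _ := by
          rw [h3, h4, sub_self, zero_add]
          split_ifs with h
          · rw [h, mul_one, mul_one]
          · simp

theorem deltaL_mul_kappa_add_kappa_mul_deltaL : deltaL * kappa + kappa * deltaL =
    (yDegOp + dxDegOp : Module.End ℝ (Omega d)) := by
  rw [deltaL, kappa, Finset.sum_mul_sum, Finset.sum_mul_sum, Finset.sum_comm (γ := Fin d)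
    (f := fun k i => yMul k * dxContr k * (dxMul i * yDeriv i)), ← Finset.sum_add_distrib]
  simp only [← Finset.sum_add_distrib, anticomm_dxMul_yDeriv_yMul_dxContr, Finset.sum_ite_eq,
    Finset.mem_univ, if_true]
  rw [Finset.sum_add_distrib, sum_dxMul_mul_dxContr, sum_yMul_mul_yDeriv, add_comm]

lemma kappa_mul_self : kappa * kappa = (0 : Module.End ℝ (Omega d)) := by
  let X : Fin d → Fin d → Module.End ℝ (Omega d) :=
    fun k l => yMul k * yMul l * (dxContr k * dxContr l)
  have hterm : ∀ k l, yMul k * dxContr k * (yMul l * dxContr l) = X k l := fun k l => by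
    calc _ = yMul k * (dxContr k * yMul l) * dxContr l := by simp only [mul_assoc]
      _ = X k l := by rw [dxContr_mul_yMul]; simp only [X, mul_assoc]
  have hanti : ∀ k l, X l k = -X k l := fun k l => by
    simp only [X]
    rw [yMul_mul_yMul l k, eq_neg_of_add_eq_zero_left (dxContr_mul_dxContr_add l k)]
    exact mul_neg (yMul k * yMul l) (dxContr k * dxContr l)
  have hS : ∑ k, ∑ l, X k l = -∑ k, ∑ l, X k l := by
    conv_lhs => rw [Finset.sum_comm]
    simp only [← Finset.sum_neg_distrib]
    exact Finset.sum_congr rfl fun l _ => Finset.sum_congr rfl fun k _ => hanti l k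
  have h2 : (2 : ℝ) • ∑ k, ∑ l, X k l = 0 := by
    rw [two_smul]
    nth_rewrite 1 [hS]
    exact neg_add_cancel _
  rw [kappa, Finset.sum_mul_sum]
  simp only [hterm]
  exact (smul_eq_zero.1 h2).resolve_left two_ne_zero

lemma deltaL_mul_degInv : deltaL * degInv = degInv * (deltaL : Module.End ℝ (Omega d)) := by
  simp only [deltaL, Finset.sum_mul, Finset.mul_sum, dxMul_mul_yDeriv_mul_degInv]

lemma kappa_mul_degInv : kappa * degInv = degInv * (kappa : Module.End ℝ (Omega d)) := by
  simp only [kappa, Finset.sum_mul, Finset.mul_sum, yMul_mul_dxContr_mul_degInv]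

theorem deltaOp_deltaInv_add_deltaInv_deltaOp_add_ofFun (u : Omega d) :
    deltaOp d (deltaInv d u) + deltaInv d (deltaOp d u) + ofFun d (sigmaOm d u) = u := by
  have key : deltaL * deltaInvL + deltaInvL * deltaL + sigmaProj =
      (1 : Module.End ℝ (Omega d)) := by
    rw [deltaInvL, ← mul_assoc, deltaL_mul_degInv, mul_assoc, mul_assoc, ← mul_add,
      deltaL_mul_kappa_add_kappa_mul_deltaL, degInv_mul_degOp, sub_add_cancel]
  simpa only [LinearMap.add_apply, Module.End.mul_apply, deltaInvL_apply, deltaL_apply,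
    sigmaProj_apply, Module.End.one_apply] using congr($key u)

theorem deltaInv_deltaInv (u : Omega d) : deltaInv d (deltaInv d u) = 0 := by
  have key : deltaInvL * deltaInvL = (0 : Module.End ℝ (Omega d)) := by
    rw [deltaInvL, mul_assoc, ← mul_assoc kappa, kappa_mul_degInv, mul_assoc, kappa_mul_self,
      mul_zero, mul_zero]
  simpa only [Module.End.mul_apply, deltaInvL_apply, LinearMap.zero_apply] using congr($key u)

end Koszul

lemma deltaInv_add (u v : Omega d) : deltaInv d (u + v) = deltaInv d u + deltaInv d v := by
  simp only [← deltaInvL_apply, map_add]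

lemma deltaInv_neg (u : Omega d) : deltaInv d (-u) = -deltaInv d u := by
  simp only [← deltaInvL_apply, map_neg]

lemma sigmaOm_deltaInv (u : Omega d) : sigmaOm d (deltaInv d u) = 0 := by
  funext x
  simp [sigmaOm, deltaInv]

lemma sigmaOm_dfed (Γ : Christoffel d) (A : VF1 d) (u : Omega d) :
    sigmaOm d (Dfed d Γ A u) = 0 := by
  funext x
  simp [sigmaOm, Dfed, nablaOp, deltaOp, vact]

lemma deltaInv_deltaOp_of_eq_zero {u : Omega d} (h : deltaInv d u = 0) (hσ : sigmaOm d u = 0) :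
    deltaInv d (deltaOp d u) = u := by
  have hofFun : ofFun d 0 = 0 := by funext m S; simp [ofFun]
  simpa [h, hσ, hofFun, ← deltaL_apply] using deltaOp_deltaInv_add_deltaInv_deltaOp_add_ofFun u

/-! ### Closed forms of the Fedosov differential -/

lemma strictlyYCausal_deltaInv : StrictlyYCausal (deltaInv d) := fun u v m h => by
  funext S x
  simp only [deltaInv]
  congr 1
  refine Finset.sum_congr rfl fun k _ => ?_
  split_ifs with hk
  · rw [h _ (by have := ydeg_sub_single_add_one hk.2; omega)]
  · rfl

lemma yCausal_nablaOp (Γ : Christoffel d) : YCausal (nablaOp d Γ) := fun u v m h => by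
  funext S x
  simp only [nablaOp, h m le_rfl]
  refine Finset.sum_congr rfl fun i _ => ?_
  congr 2
  refine Finset.sum_congr rfl fun j _ => Finset.sum_congr rfl fun k _ => ?_
  split_ifs with hj
  · have hj' : 1 ≤ (m + Finsupp.single k 1 : Mi d) j := by rw [Finsupp.add_apply]; omega
    have := ydeg_sub_single_add_one hj'
    rw [ydeg_add, ydeg_single] at this
    rw [h _ (by omega)]
  · rfl

lemma yCausal_vact {A : VF1 d} (hlow : LowDegVanish d A) : YCausal (vact d A) := fun u v m h => by
  funext S x
  simp only [vact]
  refine Finset.sum_congr rfl fun k _ => ?_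
  congr 1
  refine Finset.sum_congr rfl fun j _ => Finset.sum_congr rfl fun p hp => ?_
  by_cases hp1 : ydeg d p.1 < 2
  · simp [hlow j k p.1 hp1]
  · have hsum := congrArg (ydeg d) (Finset.HasAntidiagonal.mem_antidiagonal.1 hp)
    rw [ydeg_add] at hsum
    rw [h _ (by rw [ydeg_add, ydeg_single]; omega)]

def fedosovStep (Γ : Christoffel d) (A : VF1 d) (u : Omega d) : Omega d :=
  deltaInv d (nablaOp d Γ u + vact d A u)

lemma strictlyYCausal_fedosovStep (Γ : Christoffel d) {A : VF1 d} (hlow : LowDegVanish d A) :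
    StrictlyYCausal (fedosovStep Γ A) :=
  strictlyYCausal_deltaInv.comp ((yCausal_nablaOp Γ).add (yCausal_vact hlow))

theorem eq_of_dfed_eq_zero {Γ : Christoffel d} {A : VF1 d} (hlow : LowDegVanish d A)
    {u v : Omega d} (hu : Dfed d Γ A u = 0) (hv : Dfed d Γ A v = 0)
    (hδ : deltaInv d u = deltaInv d v) (hσ : sigmaOm d u = sigmaOm d v) : u = v := by
  have fixed : ∀ w, Dfed d Γ A w = 0 →
      ofFun d (sigmaOm d w) + deltaOp d (deltaInv d w) + fedosovStep Γ A w = w := by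
    intro w hw
    have hδw : deltaOp d w = nablaOp d Γ w + vact d A w := by
      rw [Dfed] at hw
      linear_combination -hw
    have := deltaOp_deltaInv_add_deltaInv_deltaOp_add_ofFun w
    rw [hδw] at this
    rw [fedosovStep]
    linear_combination this
  refine ((strictlyYCausal_fedosovStep Γ hlow).const_add
    (ofFun d (sigmaOm d u) + deltaOp d (deltaInv d u))).eq_of_isFixedPt (fixed u hu) ?_
  simpa only [Function.IsFixedPt, hσ, hδ] using fixed v hv

/-! ### Smoothness and exterior degree -/

lemma Smooth.add {u v : Omega d} (hu : Smooth d u) (hv : Smooth d v) : Smooth d (u + v) :=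
  fun m S => (hu m S).add (hv m S)

lemma Smooth.neg {u : Omega d} (hu : Smooth d u) : Smooth d (-u) :=
  fun m S => (hu m S).neg

lemma Smooth.deltaInv {u : Omega d} (hu : Smooth d u) : Smooth d (deltaInv d u) := fun m S => by
  refine contDiff_const.mul (ContDiff.sum fun k _ => ?_)
  split_ifs
  · exact contDiff_const.mul (hu _ _)
  · exact contDiff_const

lemma contDiff_pd {f : (Fin d → ℝ) → ℝ} (hf : ContDiff ℝ (⊤ : ℕ∞) f) (i : Fin d) :
    ContDiff ℝ (⊤ : ℕ∞) (pd d i f) :=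
  (hf.fderiv_right (by exact_mod_cast (le_top : (⊤ : ℕ∞) + 1 ≤ ⊤))).clm_apply
    contDiff_const

lemma Smooth.nablaOp {Γ : Christoffel d} (hΓ : SmoothGamma d Γ) {u : Omega d} (hu : Smooth d u) :
    Smooth d (nablaOp d Γ u) := fun m S => by
  refine ContDiff.sum fun i _ => contDiff_const.mul ((contDiff_pd (hu _ _) i).sub
    (ContDiff.sum fun j _ => ContDiff.sum fun k _ => ?_))
  split_ifs
  · exact ((hΓ _ _ _).mul contDiff_const).mul (hu _ _)
  · exact contDiff_const

lemma Smooth.vact {A : VF1 d} (hA : SmoothVF1 d A) {u : Omega d} (hu : Smooth d u) :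
    Smooth d (vact d A u) := fun _ _ =>
  ContDiff.sum fun _ _ => contDiff_const.mul (ContDiff.sum fun _ _ =>
    ContDiff.sum fun _ _ => ((hA _ _ _).mul contDiff_const).mul (hu _ _))

lemma ExtDeg.add {q : ℕ} {u v : Omega d} (hu : ExtDeg d q u) (hv : ExtDeg d q v) :
    ExtDeg d q (u + v) := fun m S hS => by
  simp only [Pi.add_apply, hu m S hS, hv m S hS, add_zero]

lemma ExtDeg.neg {q : ℕ} {u : Omega d} (hu : ExtDeg d q u) : ExtDeg d q (-u) := fun m S hS => by
  simp only [Pi.neg_apply, hu m S hS, neg_zero]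

lemma ExtDeg.deltaInv {q : ℕ} {u : Omega d} (hu : ExtDeg d (q + 1) u) :
    ExtDeg d q (deltaInv d u) := fun m S hS => by
  funext x
  refine mul_eq_zero_of_right _ (Finset.sum_eq_zero fun k _ => ?_)
  split_ifs with hk
  · rw [hu _ _ (by rw [Finset.card_insert_of_notMem hk.1]; omega), Pi.zero_apply, mul_zero]
  · rfl

lemma ExtDeg.nablaOp {q : ℕ} (Γ : Christoffel d) {u : Omega d} (hu : ExtDeg d q u) :
    ExtDeg d (q + 1) (nablaOp d Γ u) := fun m S hS => by
  funext x
  refine Finset.sum_eq_zero fun i hi => ?_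
  have := Finset.card_pos.2 ⟨i, hi⟩
  have hz : ∀ m', u m' (S.erase i) = 0 := fun m' =>
    hu m' _ (by rw [Finset.card_erase_of_mem hi]; omega)
  simp [hz, pd]

lemma ExtDeg.vact {q : ℕ} (A : VF1 d) {u : Omega d} (hu : ExtDeg d q u) :
    ExtDeg d (q + 1) (vact d A u) := fun m S hS => by
  funext x
  refine Finset.sum_eq_zero fun k hk => ?_
  have := Finset.card_pos.2 ⟨k, hk⟩
  have hz : ∀ m', u m' (S.erase k) = 0 := fun m' =>
    hu m' _ (by rw [Finset.card_erase_of_mem hk]; omega)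
  simp [hz]

def fedosovPrimitive (Γ : Christoffel d) (A : VF1 d) (a : Omega d) : Omega d :=
  yFixedPoint fun v => -deltaInv d a + fedosovStep Γ A v

section Primitive

variable {Γ : Christoffel d} {A : VF1 d} {a : Omega d}

lemma fedosovPrimitive_eq (hlow : LowDegVanish d A) :
    fedosovPrimitive Γ A a = -deltaInv d a + fedosovStep Γ A (fedosovPrimitive Γ A a) :=
  ((strictlyYCausal_fedosovStep Γ hlow).const_add _).isFixedPt_yFixedPoint.symm

lemma deltaInv_fedosovPrimitive (hlow : LowDegVanish d A) :
    deltaInv d (fedosovPrimitive Γ A a) = 0 := by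
  rw [fedosovPrimitive_eq hlow, deltaInv_add, deltaInv_neg, fedosovStep, deltaInv_deltaInv,
    deltaInv_deltaInv, neg_zero, add_zero]

lemma sigmaOm_fedosovPrimitive (hlow : LowDegVanish d A) :
    sigmaOm d (fedosovPrimitive Γ A a) = 0 := by
  rw [fedosovPrimitive_eq hlow]
  change -sigmaOm d (deltaInv d a) + sigmaOm d (fedosovStep Γ A _) = 0
  rw [fedosovStep, sigmaOm_deltaInv, sigmaOm_deltaInv, neg_zero, add_zero]

lemma smooth_fedosovPrimitive (hΓ : SmoothGamma d Γ) (hA : SmoothVF1 d A) (ha : Smooth d a) :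
    Smooth d (fedosovPrimitive Γ A a) :=
  yFixedPoint_induction (fun _ _ f => ContDiff ℝ (⊤ : ℕ∞) f) (fun _ _ => contDiff_const)
    fun _ hu => ha.deltaInv.neg.add ((Smooth.nablaOp hΓ hu).add (Smooth.vact hA hu)).deltaInv

lemma extDeg_fedosovPrimitive {q : ℕ} (ha : ExtDeg d (q + 1) a) :
    ExtDeg d q (fedosovPrimitive Γ A a) :=
  yFixedPoint_induction (fun _ S f => S.card ≠ q → f = 0) (fun _ _ _ => rfl)
    fun _ hu => ha.deltaInv.neg.add ((ExtDeg.nablaOp Γ hu).add (ExtDeg.vact A hu)).deltaInv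

lemma dfed_fedosovPrimitive (hΓ : SmoothGamma d Γ) (hA : SmoothVF1 d A) (hlow : LowDegVanish d A)
    (hnil : Nilpotent d Γ A) {q : ℕ} (ha : ExtDeg d (q + 1) a) (hsm : Smooth d a)
    (hclosed : Dfed d Γ A a = 0) : Dfed d Γ A (fedosovPrimitive Γ A a) = a := by
  set b := fedosovPrimitive Γ A a
  have hδδb : deltaInv d (deltaOp d b) = b :=
    deltaInv_deltaOp_of_eq_zero (deltaInv_fedosovPrimitive hlow) (sigmaOm_fedosovPrimitive hlow)
  have hsplit : nablaOp d Γ b + vact d A b = Dfed d Γ A b + deltaOp d b := by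
    rw [Dfed]; abel
  have hb := fedosovPrimitive_eq (Γ := Γ) (a := a) hlow
  rw [fedosovStep, hsplit, deltaInv_add, hδδb] at hb
  refine eq_of_dfed_eq_zero hlow (hnil b (smooth_fedosovPrimitive hΓ hA hsm)) hclosed
    (by linear_combination -hb) ?_
  rw [sigmaOm_dfed]
  exact (ha 0 ∅ (by simp)).symm

end Primitive

theorem fedosov_acyclic_positive_degrees_general (d : ℕ) (Γ : Christoffel d)
    (hΓ : SmoothGamma d Γ)
    (A : VF1 d) (hA : SmoothVF1 d A) (hlow : LowDegVanish d A)
    (hnil : Nilpotent d Γ A)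
    (q : ℕ) (hq : 1 ≤ q) (a : Omega d) (ha : ExtDeg d q a) (hsm : Smooth d a)
    (hclosed : Dfed d Γ A a = 0) :
    ∃ b : Omega d, ExtDeg d (q - 1) b ∧ Smooth d b ∧ Dfed d Γ A b = a ∧
      b = -deltaInv d a + deltaInv d (nablaOp d Γ b + vact d A b) ∧
      deltaInv d b = 0 ∧ sigmaOm d b = 0 := by
  obtain ⟨q, rfl⟩ : ∃ q', q = q' + 1 := ⟨q - 1, by omega⟩
  exact ⟨fedosovPrimitive Γ A a, extDeg_fedosovPrimitive ha, smooth_fedosovPrimitive hΓ hA hsm,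
    dfed_fedosovPrimitive hΓ hA hlow hnil ha hsm hclosed, fedosovPrimitive_eq hlow,
    deltaInv_fedosovPrimitive hlow, sigmaOm_fedosovPrimitive hlow⟩

/-- Acyclicity of the Fedosov differential in positive degrees.
If `q ≥ 1` and `a ∈ Ω^q` satisfies `Da = 0`, then there is `b ∈ Ω^{q−1}` with
`Db = a`; moreover `b` can be taken to be the solution of the recursion
`b = −δ⁻¹a + δ⁻¹(∇b + A·b)`, which satisfies `δ⁻¹b = 0` and `σ(b) = 0`. -/
theorem fedosov_acyclic_positive_degrees (d : ℕ) (hd : 1 ≤ d) (Γ : Christoffel d)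
    (hΓ : SmoothGamma d Γ) (hsym : TorsionFree d Γ)
    (A : VF1 d) (hA : SmoothVF1 d A) (hlow : LowDegVanish d A)
    (hdinv : DeltaInvVanish d A) (hnil : Nilpotent d Γ A)
    (q : ℕ) (hq : 1 ≤ q) (a : Omega d) (ha : ExtDeg d q a) (hsm : Smooth d a)
    (hclosed : Dfed d Γ A a = 0) :
    ∃ b : Omega d, ExtDeg d (q - 1) b ∧ Smooth d b ∧ Dfed d Γ A b = a ∧
      b = -deltaInv d a + deltaInv d (nablaOp d Γ b + vact d A b) ∧
      deltaInv d b = 0 ∧ sigmaOm d b = 0 :=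
  fedosov_acyclic_positive_degrees_general d Γ hΓ A hA hlow hnil q hq a ha hsm hclosed
end FedosovModel
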